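/- Let Φ denote the standard normal cumulative distribution function and, for a ≥ 1, define k_a(t) = a^{−1} log Φ(at). Then for every T > 0 there exists a constant C < ∞ such that |k_a(t) − k_b(t)| ≤ C|a − b| for all a, b ∈ [1,∞) and all t ∈ [−T,T]; in particular, sup{ |(∂/∂a)(a^{−1} log Φ(at))| : a ≥ 1, |t| ≤ T } < ∞. -/

import Mathlib

/-!
Differentiating in `a`, `∂ₐ k_a(t) = -a⁻² log Φ(at) + a⁻¹ t φ(at) / Φ(at)`. Both terms are
bounded on `a ≥ 1`, `|t| ≤ T` thanks to the lower bound `Φ(x) ≥ δ φ(|x| + δ)` (the mass of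
`[x - δ, x]`): with `δ = 1` it gives `-log Φ(x) = O((1 + |x|)²)`, and with `δ = (1 + |x|)⁻¹` it
gives `φ(x) / Φ(x) = O(1 + |x|)`; the factors `a⁻²` and `a⁻¹` absorb the growth in `a`.
The Lipschitz bound then follows from the mean value theorem on `[1, ∞)`.
-/

open MeasureTheory

noncomputable section

/-- The standard normal cumulative distribution function. -/
def stdNormalCDF (t : ℝ) : ℝ :=
  (Real.sqrt (2 * Real.pi))⁻¹ * ∫ y in Set.Iic t, Real.exp (-(y ^ 2) / 2)

open Real Set ProbabilityTheory

local notation "φ" => gaussianPDFReal 0 1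

theorem hasDerivAt_integral_Iic {f : ℝ → ℝ} (hf : Integrable f) (hfc : Continuous f) (t : ℝ) :
    HasDerivAt (fun u => ∫ y in Iic u, f y) (f t) t := by
  have hsplit :
      (fun u => ∫ y in Iic u, f y) = fun u => (∫ y in Iic 0, f y) + ∫ y in 0..u, f y := by
    ext u
    rw [← intervalIntegral.integral_Iic_sub_Iic hf.integrableOn hf.integrableOn]
    ring
  rw [hsplit]
  exact (intervalIntegral.integral_hasDerivAt_right hf.intervalIntegrable
    (hfc.stronglyMeasurableAtFilter _ _) hfc.continuousAt).const_add _

theorem gaussianPDFReal_zero_one (x : ℝ) : φ x = (√(2 * π))⁻¹ * exp (-(x ^ 2) / 2) := by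
  simp [gaussianPDFReal]

theorem gaussianPDFReal_le_exp_mul_of_sq_le {x y c : ℝ} (h : y ^ 2 ≤ x ^ 2 + c) :
    φ x ≤ exp (c / 2) * φ y := by
  rw [gaussianPDFReal_zero_one, gaussianPDFReal_zero_one, mul_left_comm, ← exp_add]
  gcongr
  linarith

theorem gaussianPDFReal_le_of_sq_le {x y : ℝ} (h : y ^ 2 ≤ x ^ 2) : φ x ≤ φ y := by
  simpa using gaussianPDFReal_le_exp_mul_of_sq_le (c := 0) (by simpa using h)

theorem stdNormalCDF_eq_integral (t : ℝ) : stdNormalCDF t = ∫ y in Iic t, φ y := by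
  simp only [gaussianPDFReal_zero_one, integral_const_mul, stdNormalCDF]

theorem stdNormalCDF_le_one (t : ℝ) : stdNormalCDF t ≤ 1 := by
  rw [stdNormalCDF_eq_integral, ← integral_gaussianPDFReal_eq_one 0 one_ne_zero]
  exact setIntegral_le_integral (integrable_gaussianPDFReal 0 1)
    (Filter.Eventually.of_forall (gaussianPDFReal_nonneg 0 1))

theorem hasDerivAt_stdNormalCDF (t : ℝ) : HasDerivAt stdNormalCDF (φ t) t := by
  simp only [funext stdNormalCDF_eq_integral]
  exact hasDerivAt_integral_Iic (integrable_gaussianPDFReal 0 1)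
    (by rw [gaussianPDFReal_def]; fun_prop) t

theorem mul_gaussianPDFReal_le_stdNormalCDF (x : ℝ) {δ : ℝ} (hδ : 0 < δ) :
    δ * φ (|x| + δ) ≤ stdNormalCDF x := by
  calc δ * φ (|x| + δ) = ∫ _ in x - δ..x, φ (|x| + δ) := by simp
    _ ≤ ∫ y in x - δ..x, φ y := by
        refine intervalIntegral.integral_mono_on (by linarith) intervalIntegrable_const
          (integrable_gaussianPDFReal 0 1).intervalIntegrable fun y hy => ?_
        apply gaussianPDFReal_le_of_sq_le
        rw [← sq_abs y]
        have : |y| ≤ |x| + δ :=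
          abs_le.2 ⟨by linarith [neg_abs_le x, hy.1], by linarith [le_abs_self x, hy.2]⟩
        gcongr
    _ = ∫ y in Ioc (x - δ) x, φ y := intervalIntegral.integral_of_le (by linarith)
    _ ≤ stdNormalCDF x := by
        rw [stdNormalCDF_eq_integral]
        exact setIntegral_mono_set (integrable_gaussianPDFReal 0 1).integrableOn
          (Filter.Eventually.of_forall (gaussianPDFReal_nonneg 0 1))
          (Filter.Eventually.of_forall fun y hy => hy.2)

theorem stdNormalCDF_pos (t : ℝ) : 0 < stdNormalCDF t := by
  have h := mul_gaussianPDFReal_le_stdNormalCDF t one_pos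
  rw [one_mul] at h
  exact (gaussianPDFReal_pos 0 1 _ one_ne_zero).trans_le h

theorem neg_log_stdNormalCDF_le (x : ℝ) :
    -log (stdNormalCDF x) ≤ log √(2 * π) + (|x| + 1) ^ 2 / 2 := by
  have h := log_le_log (gaussianPDFReal_pos 0 1 _ one_ne_zero)
    (by simpa using mul_gaussianPDFReal_le_stdNormalCDF x one_pos)
  rw [gaussianPDFReal_zero_one, log_mul (by positivity) (exp_pos _).ne', log_inv, log_exp] at h
  linarith

theorem gaussianPDFReal_le_stdNormalCDF (x : ℝ) :
    φ x ≤ exp (3 / 2) * (1 + |x|) * stdNormalCDF x := by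
  set δ := (1 + |x|)⁻¹
  have hδ : 0 < δ := by positivity
  have hδ1 : δ ≤ 1 := inv_le_one_of_one_le₀ (by linarith [abs_nonneg x])
  have hxδ : |x| * δ ≤ 1 := by
    rw [← div_eq_mul_inv, div_le_one (by positivity)]; linarith
  have hsq : (|x| + δ) ^ 2 ≤ x ^ 2 + 3 := by nlinarith [sq_abs x]
  calc φ x ≤ exp (3 / 2) * φ (|x| + δ) := gaussianPDFReal_le_exp_mul_of_sq_le hsq
    _ = exp (3 / 2) * (1 + |x|) * (δ * φ (|x| + δ)) := by
        rw [mul_assoc, ← mul_assoc (1 + |x|), mul_inv_cancel₀ (by positivity), one_mul]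
    _ ≤ exp (3 / 2) * (1 + |x|) * stdNormalCDF x := by
        gcongr
        exact mul_gaussianPDFReal_le_stdNormalCDF x hδ

def scaledLogCDF (a t : ℝ) : ℝ := a⁻¹ * log (stdNormalCDF (a * t))

theorem hasDerivAt_scaledLogCDF (t : ℝ) {a : ℝ} (ha : a ≠ 0) :
    HasDerivAt (scaledLogCDF · t) (-(a ^ 2)⁻¹ * log (stdNormalCDF (a * t)) +
      a⁻¹ * (φ (a * t) * t / stdNormalCDF (a * t))) a := by
  have hlin : HasDerivAt (· * t) t a := by simpa using (hasDerivAt_id a).mul_const t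
  have hΦ := (hasDerivAt_stdNormalCDF (a * t)).comp a hlin
  exact (hasDerivAt_inv ha).mul (hΦ.log (stdNormalCDF_pos _).ne')

theorem neg_log_stdNormalCDF_mul_div_sq_le (t : ℝ) {a : ℝ} (ha : 1 ≤ a) :
    -log (stdNormalCDF (a * t)) / a ^ 2 ≤ log √(2 * π) + (|t| + 1) ^ 2 / 2 := by
  have hL : 0 ≤ log √(2 * π) := log_nonneg (one_le_sqrt.2 (by linarith [pi_gt_three]))
  have hat : |a * t| + 1 ≤ a * (|t| + 1) := by
    rw [abs_mul, abs_of_pos (by linarith)]; linarith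
  rw [div_le_iff₀ (by positivity)]
  calc -log (stdNormalCDF (a * t)) ≤ log √(2 * π) + (|a * t| + 1) ^ 2 / 2 :=
        neg_log_stdNormalCDF_le _
    _ ≤ log √(2 * π) * a ^ 2 + (a * (|t| + 1)) ^ 2 / 2 := by
        gcongr
        · exact le_mul_of_one_le_right hL (by nlinarith)
    _ = (log √(2 * π) + (|t| + 1) ^ 2 / 2) * a ^ 2 := by ring

theorem gaussianPDFReal_mul_div_stdNormalCDF_mul_le (t : ℝ) {a : ℝ} (ha : 1 ≤ a) :
    φ (a * t) * |t| / (a * stdNormalCDF (a * t)) ≤ exp (3 / 2) * (|t| + t ^ 2) := by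
  have ha0 : 0 < a := by linarith
  have hΦ := stdNormalCDF_pos (a * t)
  rw [div_le_iff₀ (by positivity)]
  calc φ (a * t) * |t| ≤ exp (3 / 2) * (1 + a * |t|) * stdNormalCDF (a * t) * |t| := by
        gcongr
        simpa [abs_mul, abs_of_pos ha0] using gaussianPDFReal_le_stdNormalCDF (a * t)
    _ = exp (3 / 2) * (|t| + a * t ^ 2) * stdNormalCDF (a * t) := by
        rw [← sq_abs t]; ring
    _ ≤ exp (3 / 2) * (a * |t| + a * t ^ 2) * stdNormalCDF (a * t) := by
        gcongr
        exact le_mul_of_one_le_left (abs_nonneg t) ha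
    _ = exp (3 / 2) * (|t| + t ^ 2) * (a * stdNormalCDF (a * t)) := by ring

theorem abs_deriv_scaledLogCDF_le {T t a : ℝ} (ht : |t| ≤ T) (ha : 1 ≤ a) :
    |deriv (scaledLogCDF · t) a| ≤
      log √(2 * π) + (T + 1) ^ 2 / 2 + exp (3 / 2) * (T + T ^ 2) := by
  have ha0 : 0 < a := by linarith
  have hΦ := stdNormalCDF_pos (a * t)
  have hlog : log (stdNormalCDF (a * t)) ≤ 0 := log_nonpos hΦ.le (stdNormalCDF_le_one _)
  have hsq : t ^ 2 ≤ T ^ 2 := by rw [← sq_abs t]; gcongr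
  rw [(hasDerivAt_scaledLogCDF t ha0.ne').deriv]
  calc _ ≤ |-(a ^ 2)⁻¹ * log (stdNormalCDF (a * t))|
        + |a⁻¹ * (φ (a * t) * t / stdNormalCDF (a * t))| := abs_add_le _ _
    _ = -log (stdNormalCDF (a * t)) / a ^ 2
        + φ (a * t) * |t| / (a * stdNormalCDF (a * t)) := by
        rw [abs_of_nonneg (by nlinarith [inv_pos.2 (pow_pos ha0 2)]), abs_mul, abs_div, abs_mul,
          abs_of_pos (inv_pos.2 ha0), abs_of_pos (gaussianPDFReal_pos 0 1 _ one_ne_zero),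
          abs_of_pos hΦ]
        field_simp
    _ ≤ (log √(2 * π) + (|t| + 1) ^ 2 / 2) + exp (3 / 2) * (|t| + t ^ 2) :=
        add_le_add (neg_log_stdNormalCDF_mul_div_sq_le t ha)
          (gaussianPDFReal_mul_div_stdNormalCDF_mul_le t ha)
    _ ≤ _ := by gcongr

theorem ka_uniformly_lipschitz_in_a_general (T : ℝ) :
    (∃ C : ℝ, ∀ a b : ℝ, 1 ≤ a → 1 ≤ b → ∀ t : ℝ, |t| ≤ T →
        |a⁻¹ * Real.log (stdNormalCDF (a * t)) - b⁻¹ * Real.log (stdNormalCDF (b * t))| ≤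
          C * |a - b|) ∧
    (∃ C' : ℝ, ∀ a : ℝ, 1 ≤ a → ∀ t : ℝ, |t| ≤ T →
        |deriv (fun a' : ℝ => a'⁻¹ * Real.log (stdNormalCDF (a' * t))) a| ≤ C') := by
  let C := log √(2 * π) + (T + 1) ^ 2 / 2 + exp (3 / 2) * (T + T ^ 2)
  refine ⟨⟨C, fun a b ha hb t ht => ?_⟩, ⟨C, fun a ha t ht => abs_deriv_scaledLogCDF_le ht ha⟩⟩
  refine (convex_Ici 1).norm_image_sub_le_of_norm_hasDerivWithin_le (f := (scaledLogCDF · t))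
    (fun x hx => ?_) (fun x hx => abs_deriv_scaledLogCDF_le ht hx) hb ha
  exact (hasDerivAt_scaledLogCDF t (by linarith [mem_Ici.1 hx] : x ≠ 0)).differentiableAt
    |>.hasDerivAt.hasDerivWithinAt

theorem ka_uniformly_lipschitz_in_a (T : ℝ) (hT : 0 < T) :
    (∃ C : ℝ, ∀ a b : ℝ, 1 ≤ a → 1 ≤ b → ∀ t : ℝ, |t| ≤ T →
        |a⁻¹ * Real.log (stdNormalCDF (a * t)) - b⁻¹ * Real.log (stdNormalCDF (b * t))| ≤
          C * |a - b|) ∧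
    (∃ C' : ℝ, ∀ a : ℝ, 1 ≤ a → ∀ t : ℝ, |t| ≤ T →
        |deriv (fun a' : ℝ => a'⁻¹ * Real.log (stdNormalCDF (a' * t))) a| ≤ C') :=
  ka_uniformly_lipschitz_in_a_general T
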